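/- Term Reducibility: for a closed lambda term M, the following are equivalent: (1) M →v^n N with N a CBV normal form; (2) ⌊M⌋ →^n t in Φ with t a Φ-normal form and ⌈t⌉ = N. In particular, the number of reduction steps is exactly preserved. -/

import Mathlib

/-- Pure untyped λ-terms with named variables. -/
inductive Tm : Type
  | var : ℕ → Tm
  | lam : ℕ → Tm → Tm
  | app : Tm → Tm → Tm
deriving DecidableEq

namespace Tm

/-- Free variables. -/
def fv : Tm → Finset ℕ
  | var x => {x}
  | lam x M => fv M \ {x}
  | app M N => fv M ∪ fv N

/-- A term is closed when it has no free variables. -/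
def Closed (M : Tm) : Prop := fv M = ∅

/-- Values: variables and abstractions. -/
def IsValue : Tm → Prop
  | var _ => True
  | lam _ _ => True
  | app _ _ => False

/-- (Naive) substitution `M{N/x}`. -/
def subst : Tm → ℕ → Tm → Tm
  | var y, x, N => if y = x then N else var y
  | lam y P, x, N => if y = x then lam y P else lam y (subst P x N)
  | app P Q, x, N => app (subst P x N) (subst Q x N)

/-- Weak call-by-value reduction: β-redexes whose argument is a value,
closed under both application contexts, never under λ. -/
inductive Cbv : Tm → Tm → Prop
  | beta {x M V} : IsValue V → Cbv (app (lam x M) V) (subst M x V)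
  | appL {M N L} : Cbv M N → Cbv (app M L) (app N L)
  | appR {M N L} : Cbv M N → Cbv (app L M) (app L N)

/-- The subterm relation on λ-terms. -/
inductive Sub : Tm → Tm → Prop
  | refl (M) : Sub M M
  | lam {M N x} : Sub M N → Sub M (lam x N)
  | appL {M N L} : Sub M N → Sub M (app N L)
  | appR {M N L} : Sub M L → Sub M (app N L)

end Tm

/-- `M N₁ … Nₖ` (left-nested application). -/
def appList : Tm → List Tm → Tm := List.foldl Tm.app

/-- `λx₁.…λxₖ.M`. -/
def lams : List ℕ → Tm → Tm := fun xs M => xs.foldr Tm.lam M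

/-- `stepsN R n a b`: `a` reduces to `b` in exactly `n` `R`-steps. -/
def stepsN {α : Type*} (R : α → α → Prop) : ℕ → α → α → Prop
  | 0, a, b => a = b
  | n + 1, a, b => ∃ c, R a c ∧ stepsN R n c b

/-- `a` is an `R`-normal form. -/
def NormalForm {α : Type*} (R : α → α → Prop) (a : α) : Prop := ¬ ∃ b, R a b

/-- Terms of the constructor rewrite system Φ: variables, the binary function
symbol `app`, and a constructor `c_{x,M}` for each variable `x` and λ-term `M`. -/
inductive PTm : Type
  | pvar : ℕ → PTm
  | papp : PTm → PTm → PTm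
  | con : ℕ → Tm → List PTm → PTm

namespace PTm

/-- The (sorted) list of free variables of a λ-term. -/
def fvList (M : Tm) : List ℕ := (Tm.fv M).sort (· ≤ ·)

/-- The translation `⌊·⌋` from λ-terms to Φ-terms. -/
def toP : Tm → PTm
  | .var x => pvar x
  | .lam x M => con x M ((fvList (Tm.lam x M)).map pvar)
  | .app M N => papp (toP M) (toP N)

/-- Simultaneous (sequential, for closed arguments) λ-substitution `M{Nᵢ/xᵢ}`. -/
def substList (M : Tm) (xs : List ℕ) (Ns : List Tm) : Tm :=
  (xs.zip Ns).foldl (fun acc p => Tm.subst acc p.1 p.2) M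

/-- The readback `⌈·⌉` from Φ-terms to λ-terms. -/
def toL : PTm → Tm
  | pvar x => .var x
  | papp u v => .app (toL u) (toL v)
  | con x M ts =>
      substList (Tm.lam x M) (fvList (Tm.lam x M)) (ts.attach.map fun t => toL t.1)
termination_by t => sizeOf t
decreasing_by all_goals first
  | (simp_wf; have := List.sizeOf_lt_of_mem t.2; omega)
  | (simp_wf; omega)
  | simp_wf

/-- First-order substitution on Φ-terms. -/
def psubst : PTm → ℕ → PTm → PTm
  | pvar y, x, N => if y = x then N else pvar y
  | papp u v, x, N => papp (psubst u x N) (psubst v x N)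
  | con y M ts, x, N => con y M (ts.attach.map fun t => psubst t.1 x N)
termination_by t _ _ => sizeOf t
decreasing_by all_goals first
  | (simp_wf; have := List.sizeOf_lt_of_mem t.2; omega)
  | (simp_wf; omega)
  | simp_wf

/-- Simultaneous (sequential, for ground arguments) substitution on Φ-terms. -/
def psubstList (t : PTm) (xs : List ℕ) (us : List PTm) : PTm :=
  (xs.zip us).foldl (fun acc p => psubst acc p.1 p.2) t

/-- Constructor terms of Φ: ground terms built from constructors only. -/
inductive IsConT : PTm → Prop
  | con {x M ts} : (∀ t ∈ ts, IsConT t) → IsConT (con x M ts)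

/-- Well-formed Φ-terms: every constructor `c_{x,M}` gets exactly
`|FV(λx.M)|` arguments. -/
inductive WF : PTm → Prop
  | pvar (x) : WF (pvar x)
  | papp {u v} : WF u → WF v → WF (papp u v)
  | con {x M ts} : ts.length = (fvList (Tm.lam x M)).length →
      (∀ t ∈ ts, WF t) → WF (con x M ts)

/-- Canonical closed Φ-terms: constructor terms, or `app` of canonical terms. -/
inductive Canonical : PTm → Prop
  | ofCon {t} : IsConT t → Canonical t
  | papp {u v} : Canonical u → Canonical v → Canonical (papp u v)

/-- Call-by-value rewriting in Φ: the rules are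
`app(c_{x,M}(x₁,…,xₙ), x) → ⌊M⌋` (with `FV(λx.M) = x₁,…,xₙ`), matched
variables are instantiated by constructor terms, and rewriting is closed
under arbitrary contexts. -/
inductive Step : PTm → PTm → Prop
  | beta {x : ℕ} {M : Tm} {ts : List PTm} {v : PTm} :
      (∀ t ∈ ts, IsConT t) → IsConT v →
      ts.length = (fvList (Tm.lam x M)).length →
      Step (papp (con x M ts) v)
        (psubstList (toP M) (fvList (Tm.lam x M) ++ [x]) (ts ++ [v]))
  | appL {u u' v} : Step u u' → Step (papp u v) (papp u' v)
  | appR {u v v'} : Step v v' → Step (papp u v) (papp u v')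
  | conArg {x M t t' l r} : Step t t' →
      Step (con x M (l ++ t :: r)) (con x M (l ++ t' :: r))

/-- Variables occurring in a Φ-term. -/
def pvarsOf : PTm → Finset ℕ
  | pvar x => {x}
  | papp u v => pvarsOf u ∪ pvarsOf v
  | con _ _ ts => ts.attach.foldr (fun t s => pvarsOf t.1 ∪ s) ∅
termination_by t => sizeOf t
decreasing_by all_goals first
  | (simp_wf; have := List.sizeOf_lt_of_mem t.2; omega)
  | (simp_wf; omega)
  | simp_wf

/-- The subterm relation on Φ-terms. -/
inductive PSub : PTm → PTm → Prop
  | refl (t) : PSub t t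
  | appL {t u v} : PSub t u → PSub t (papp u v)
  | appR {t u v} : PSub t v → PSub t (papp u v)
  | conArg {t u x M ts} : u ∈ ts → PSub t u → PSub t (con x M ts)

end PTm

/-!
The readback `⌈·⌉` is a lockstep bisimulation between Φ-rewriting on well-formed canonical
terms and weak call-by-value reduction: a Φ-step from a canonical `t` reads back as exactly one
`→v`-step from `⌈t⌉`, every `→v`-step from `⌈t⌉` is the readback of a Φ-step from `t`, and
canonical terms reduce to canonical terms. Since `⌈⌊M⌋⌉ = M` and `⌊M⌋` is canonical for closed
`M`, reduction sequences and normal forms correspond with the same number of steps.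

The only real work is the root redex `app(c_{x,M}(t⃗), v)`: its contractum instantiates the free
variables of `⌊M⌋` by constructor terms, and the readback of such partial instances commutes
with substitution because constructor terms read back to closed abstractions, which are values.
-/

section Simulation

variable {α β : Type*} {R : α → α → Prop} {S : β → β → Prop} {I : β → Prop} {f : β → α}

theorem stepsN_map (hsim : ∀ {b b'}, I b → S b b' → I b' ∧ R (f b) (f b')) :
    ∀ {n b b'}, I b → stepsN S n b b' → I b' ∧ stepsN R n (f b) (f b')
  | 0, _, _, hb, rfl => ⟨hb, rfl⟩
  | _ + 1, _, _, hb, ⟨_, hstep, hrest⟩ =>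
    have ⟨hc, hR⟩ := hsim hb hstep
    have ⟨hb', hsteps⟩ := stepsN_map hsim hc hrest
    ⟨hb', _, hR, hsteps⟩

theorem stepsN_lift (hlift : ∀ {b a'}, I b → R (f b) a' → ∃ b', S b b' ∧ I b' ∧ f b' = a') :
    ∀ {n b a}, I b → stepsN R n (f b) a → ∃ b', stepsN S n b b' ∧ I b' ∧ f b' = a
  | 0, b, _, hb, rfl => ⟨b, rfl, hb, rfl⟩
  | _ + 1, _, _, hb, ⟨_, hstep, hrest⟩ => by
    obtain ⟨c, hS, hc, rfl⟩ := hlift hb hstep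
    obtain ⟨b', hsteps, hb', hfb'⟩ := stepsN_lift hlift hc hrest
    exact ⟨b', ⟨c, hS, hsteps⟩, hb', hfb'⟩

theorem normalForm_iff_of_simulation (hsim : ∀ {b b'}, I b → S b b' → I b' ∧ R (f b) (f b'))
    (hlift : ∀ {b a'}, I b → R (f b) a' → ∃ b', S b b' ∧ I b' ∧ f b' = a') {b : β} (hb : I b) :
    NormalForm R (f b) ↔ NormalForm S b := by
  refine not_congr ⟨fun ⟨_, hR⟩ => ?_, fun ⟨_, hS⟩ => ⟨_, (hsim hb hS).2⟩⟩
  obtain ⟨b', hS, -⟩ := hlift hb hR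
  exact ⟨b', hS⟩

end Simulation

namespace Tm

theorem fv_subst_subset (M : Tm) (x : ℕ) (N : Tm) : fv (subst M x N) ⊆ fv M \ {x} ∪ fv N := by
  intro z
  induction M with
  | var y => by_cases hyx : y = x <;> simp_all [subst, fv]
  | lam y P ih => by_cases hyx : y = x <;> simp_all [subst, fv]
  | app P Q ihP ihQ => simp only [subst, fv, Finset.mem_union, Finset.mem_sdiff] at *; tauto

theorem not_mem_fv_subst {M N : Tm} {x y : ℕ} (hM : y ∉ fv M ∨ y = x) (hN : y ∉ fv N) :
    y ∉ fv (subst M x N) := fun hy => by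
  have := fv_subst_subset M x N hy
  simp_all

theorem subst_of_not_mem_fv {M : Tm} {x : ℕ} (h : x ∉ fv M) (N : Tm) : subst M x N = M := by
  induction M with
  | var y => simp_all [fv, subst, eq_comm]
  | lam y P ih =>
    by_cases hyx : y = x
    · simp [subst, hyx]
    · simp_all [subst, fv, Ne.symm hyx]
  | app P Q ihP ihQ => simp_all [fv, subst]

theorem subst_var_self (M : Tm) (x : ℕ) : subst M x (var x) = M := by
  induction M with
  | var y => by_cases hyx : y = x <;> simp [subst, hyx]
  | lam y P ih => by_cases hyx : y = x <;> simp [subst, hyx, ih]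
  | app P Q ihP ihQ => simp [subst, ihP, ihQ]

theorem subst_subst_self (M : Tm) (x : ℕ) (N w : Tm) :
    subst (subst M x N) x w = subst M x (subst N x w) := by
  induction M with
  | var y => by_cases hyx : y = x <;> simp [subst, hyx]
  | lam y P ih => by_cases hyx : y = x <;> simp [subst, hyx, ih]
  | app P Q ihP ihQ => simp [subst, ihP, ihQ]

theorem subst_comm {M N w : Tm} {x y : ℕ} (hxy : x ≠ y) (hxw : x ∉ fv w) (hyN : y ∉ fv N) :
    subst (subst M x N) y w = subst (subst M y w) x N := by
  induction M with
  | var z =>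
    by_cases hzx : z = x
    · simp [subst, hzx, hxy, subst_of_not_mem_fv hyN]
    · by_cases hzy : z = y
      · simp [subst, hzy, Ne.symm hxy, subst_of_not_mem_fv hxw]
      · simp [subst, hzx, hzy]
  | lam z P ih =>
    by_cases hzx : z = x
    · simp [subst, hzx, hxy]
    · by_cases hzy : z = y
      · simp [subst, hzy, Ne.symm hxy]
      · simp [subst, hzx, hzy, ih]
  | app P Q ihP ihQ => simp [subst, ihP, ihQ]

end Tm

namespace PTm
open Tm

@[simp] theorem substList_cons (M : Tm) (x : ℕ) (xs : List ℕ) (N : Tm) (Ns : List Tm) :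
    substList M (x :: xs) (N :: Ns) = substList (subst M x N) xs Ns := rfl

theorem substList_append {xs ys : List ℕ} {Ns Ms : List Tm} (h : xs.length = Ns.length)
    (M : Tm) : substList M (xs ++ ys) (Ns ++ Ms) = substList (substList M xs Ns) ys Ms := by
  simp only [substList, List.zip_append h, List.foldl_append]

theorem substList_lam {x : ℕ} {xs : List ℕ} (h : x ∉ xs) (M : Tm) (Ns : List Tm) :
    substList (lam x M) xs Ns = lam x (substList M xs Ns) := by
  induction xs generalizing Ns M with
  | nil => rfl
  | cons y ys ih =>
    cases Ns with
    | nil => rfl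
    | cons N Ns =>
      have hxy : x ≠ y := fun hxy => h (by simp [hxy])
      simp only [substList_cons, subst, hxy, if_false]
      exact ih (fun hx => h (by simp [hx])) _ _

theorem substList_map_var (M : Tm) (xs : List ℕ) : substList M xs (xs.map var) = M := by
  induction xs generalizing M with
  | nil => rfl
  | cons x xs ih => simp [subst_var_self, ih]

theorem fv_substList_subset {xs : List ℕ} {Ns : List Tm} (hNs : ∀ N ∈ Ns, fv N = ∅)
    (hlen : xs.length = Ns.length) (M : Tm) : fv (substList M xs Ns) ⊆ fv M \ xs.toFinset := by
  induction xs generalizing Ns M with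
  | nil => simp [substList]
  | cons x xs ih =>
    obtain _ | ⟨N, Ns⟩ := Ns
    · simp at hlen
    intro z hz
    have h1 := ih (fun N hN => hNs N (by simp [hN])) (by simpa using hlen) _ hz
    have h2 := fv_subst_subset M x N (Finset.mem_sdiff.mp h1).1
    simp_all

theorem subst_substList_comm {y : ℕ} {w : Tm} {xs : List ℕ} {Ns : List Tm} (hw : fv w = ∅)
    (hy : y ∉ xs) (hNs : ∀ N ∈ Ns, y ∉ fv N) (M : Tm) :
    subst (substList M xs Ns) y w = substList (subst M y w) xs Ns := by
  induction xs generalizing Ns M with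
  | nil => rfl
  | cons x xs ih =>
    obtain _ | ⟨N, Ns⟩ := Ns
    · rfl
    have hxy : x ≠ y := fun h => hy (by simp [h])
    simp only [substList_cons]
    rw [ih (fun h => hy (by simp [h])) (fun N' hN' => hNs N' (by simp [hN'])),
      subst_comm hxy (by simp [hw]) (hNs N (by simp))]

theorem subst_substList_map {y : ℕ} {w : Tm} {xs : List ℕ} {σ : ℕ → Tm} (hw : fv w = ∅)
    (hxs : xs.Nodup) (hσ : ∀ z ∈ xs, fv (σ z) ⊆ {z}) {M : Tm} (hy : y ∉ fv M ∨ y ∈ xs) :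
    subst (substList M xs (xs.map σ)) y w
      = substList M xs (xs.map fun z => subst (σ z) y w) := by
  have hfree : ∀ z ∈ xs, z ≠ y → y ∉ fv (σ z) := fun z hz hzy hy =>
    hzy (Finset.mem_singleton.mp (hσ z hz hy)).symm
  induction xs generalizing M with
  | nil => simpa [substList] using subst_of_not_mem_fv (hy.resolve_right List.not_mem_nil) w
  | cons x xs ih =>
    obtain ⟨hx, hxs⟩ := List.nodup_cons.mp hxs
    simp only [List.map_cons, substList_cons]
    by_cases hxy : x = y
    · subst hxy
      have hmap : xs.map (fun z => subst (σ z) x w) = xs.map σ :=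
        List.map_congr_left fun z hz =>
          subst_of_not_mem_fv (hfree z (by simp [hz]) (fun h => hx (h ▸ hz))) w
      rw [hmap, subst_substList_comm hw hx, subst_subst_self]
      simpa using fun z hz => hfree z (by simp [hz]) (fun h => hx (h ▸ hz))
    · rw [subst_of_not_mem_fv (hfree x (by simp) hxy)]
      refine ih hxs (fun z hz => hσ z (by simp [hz])) ?_ (fun z hz => hfree z (by simp [hz]))
      refine hy.imp (fun h => not_mem_fv_subst (.inl h) (hfree x (by simp) hxy)) ?_
      exact fun h => (List.mem_cons.mp h).resolve_left (Ne.symm hxy)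

theorem mem_fvList {z : ℕ} {M : Tm} : z ∈ fvList M ↔ z ∈ fv M := Finset.mem_sort _

theorem fvList_nodup (M : Tm) : (fvList M).Nodup := Finset.sort_nodup _ _

theorem fvList_toFinset (M : Tm) : (fvList M).toFinset = fv M := Finset.sort_toFinset _ _

theorem not_mem_fvList_lam (x : ℕ) (M : Tm) : x ∉ fvList (lam x M) := by
  simp [mem_fvList, fv]

@[simp] theorem toL_pvar (x : ℕ) : toL (pvar x) = var x := by rw [toL]

@[simp] theorem toL_papp (u v : PTm) : toL (papp u v) = .app (toL u) (toL v) := by rw [toL]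

@[simp] theorem toL_con (x : ℕ) (M : Tm) (ts : List PTm) :
    toL (con x M ts) = lam x (substList M (fvList (lam x M)) (ts.map toL)) := by
  rw [toL, List.attach_map_val, substList_lam (not_mem_fvList_lam x M)]

@[simp] theorem psubst_pvar (z x : ℕ) (u : PTm) :
    psubst (pvar z) x u = if z = x then u else pvar z := by rw [psubst]

@[simp] theorem psubst_papp (a b : PTm) (x : ℕ) (u : PTm) :
    psubst (papp a b) x u = papp (psubst a x u) (psubst b x u) := by rw [psubst]

@[simp] theorem psubst_con (y : ℕ) (M : Tm) (ts : List PTm) (x : ℕ) (u : PTm) :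
    psubst (con y M ts) x u = con y M (ts.map fun t => psubst t x u) := by
  rw [psubst, List.attach_map_val (f := fun t => psubst t x u)]

@[simp] theorem psubstList_cons (t : PTm) (x : ℕ) (xs : List ℕ) (u : PTm) (us : List PTm) :
    psubstList t (x :: xs) (u :: us) = psubstList (psubst t x u) xs us := rfl

theorem toL_toP (M : Tm) : toL (toP M) = M := by
  induction M with
  | var x => simp [toP]
  | lam x P _ => simp [toP, Function.comp_def, substList_map_var]
  | app P Q ihP ihQ => simp [toP, ihP, ihQ]

theorem IsConT.psubst_eq {t : PTm} (h : IsConT t) (y : ℕ) (u : PTm) : psubst t y u = t := by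
  induction h with
  | con _ ih => simpa using List.map_congr_left ih

theorem IsConT.isValue_toL {t : PTm} (h : IsConT t) : IsValue (toL t) := by
  cases h
  simp [IsValue]

theorem IsConT.fv_toL {t : PTm} (h : IsConT t) (hwf : WF t) : fv (toL t) = ∅ := by
  induction h with
  | @con x M ts _ ih =>
    cases hwf with | con hlen hwfs =>
    rw [toL_con, ← substList_lam (not_mem_fvList_lam x M), ← Finset.subset_empty]
    refine (fv_substList_subset ?_ (by simp [hlen]) _).trans ?_
    · simpa using fun t ht => ih t ht (hwfs t ht)
    · simp [fvList_toFinset]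

theorem IsConT.normalForm {t : PTm} (h : IsConT t) : NormalForm Step t := by
  rintro ⟨t', hstep⟩
  induction hstep with
  | beta | appL | appR => cases h
  | conArg _ ih => cases h with
    | con hts => exact ih (hts _ (by simp))

/-- The shape of a translation `⌊M⌋` after some of its variables have been instantiated by
well-formed constructor terms; the variables not yet instantiated lie in `S`. -/
inductive PartialInst (S : Finset ℕ) : PTm → Prop
  | pvar {x} : x ∈ S → PartialInst S (pvar x)
  | value {t} : IsConT t → WF t → PartialInst S t
  | papp {u v} : PartialInst S u → PartialInst S v → PartialInst S (papp u v)
  | con {x M} {g : ℕ → PTm} :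
      (∀ z ∈ fvList (lam x M), g z = pvar z ∧ z ∈ S ∨ IsConT (g z) ∧ WF (g z)) →
      PartialInst S (con x M ((fvList (lam x M)).map g))

theorem partialInst_toP {S : Finset ℕ} {M : Tm} (h : fv M ⊆ S) : PartialInst S (toP M) := by
  induction M with
  | var x => exact .pvar (by simpa [fv] using h)
  | lam x P _ => exact .con fun z hz => .inl ⟨rfl, h (mem_fvList.mp hz)⟩
  | app P Q ihP ihQ =>
    exact .papp (ihP (Finset.union_subset_left h)) (ihQ (Finset.union_subset_right h))

namespace PartialInst

variable {S : Finset ℕ} {t : PTm}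

theorem wf (h : PartialInst S t) : WF t := by
  induction h with
  | pvar => exact .pvar _
  | value _ hwf => exact hwf
  | papp _ _ hu hv => exact .papp hu hv
  | con hg =>
    refine .con (List.length_map _) fun t ht => ?_
    obtain ⟨z, hz, rfl⟩ := List.mem_map.mp ht
    rcases hg z hz with ⟨hgz, -⟩ | ⟨-, hwf⟩
    · exact hgz ▸ .pvar z
    · exact hwf

theorem canonical (h : PartialInst ∅ t) : Canonical t := by
  induction h with
  | pvar hx => simp at hx
  | value hcon => exact .ofCon hcon
  | papp _ _ hu hv => exact .papp hu hv
  | con hg =>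
    refine .ofCon (.con fun t ht => ?_)
    obtain ⟨z, hz, rfl⟩ := List.mem_map.mp ht
    rcases hg z hz with ⟨-, hzS⟩ | ⟨hcon, -⟩
    · simp at hzS
    · exact hcon

variable {u : PTm}

theorem psubst (h : PartialInst S t) (hu : IsConT u) (hwu : WF u) (y : ℕ) :
    PartialInst (S.erase y) (psubst t y u) := by
  induction h with
  | @pvar x hx =>
    by_cases hxy : x = y
    · simpa [hxy] using PartialInst.value hu hwu
    · simpa [hxy] using PartialInst.pvar (Finset.mem_erase.mpr ⟨hxy, hx⟩)
  | value hcon hwf => rw [hcon.psubst_eq]; exact .value hcon hwf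
  | papp _ _ ihu ihv => rw [psubst_papp]; exact .papp ihu ihv
  | @con x M g hg =>
    rw [psubst_con, List.map_map]
    refine .con fun z hz => ?_
    rcases hg z hz with ⟨hgz, hzS⟩ | ⟨hcon, hwf⟩
    · rw [Function.comp_apply, hgz, psubst_pvar]
      split_ifs with hzy
      · exact .inr ⟨hu, hwu⟩
      · exact .inl ⟨rfl, Finset.mem_erase.mpr ⟨hzy, hzS⟩⟩
    · simp [hcon.psubst_eq, hcon, hwf]

theorem toL_psubst (h : PartialInst S t) (hu : IsConT u) (hwu : WF u) (y : ℕ) :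
    toL (t.psubst y u) = subst (toL t) y (toL u) := by
  have hclosed := hu.fv_toL hwu
  induction h with
  | @pvar x _ => by_cases hxy : x = y <;> simp [subst, hxy]
  | value hcon hwf => simp [hcon.psubst_eq, subst_of_not_mem_fv, hcon.fv_toL hwf]
  | papp _ _ ihu ihv => simp [subst, ihu, ihv]
  | @con x M g hg =>
    have hentry : ∀ z ∈ fvList (lam x M),
        toL (PTm.psubst (g z) y u) = subst (toL (g z)) y (toL u) ∧ fv (toL (g z)) ⊆ {z} := by
      intro z hz
      rcases hg z hz with ⟨hgz, -⟩ | ⟨hcon, hwf⟩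
      · rw [hgz]
        by_cases hzy : z = y <;> simp [hzy, subst, fv]
      · simp [hcon.psubst_eq, subst_of_not_mem_fv, hcon.fv_toL hwf]
    simp only [psubst_con, toL_con, List.map_map, Function.comp_def]
    rw [List.map_congr_left fun z hz => (hentry z hz).1]
    by_cases hxy : x = y
    · subst hxy
      simp only [subst, if_true]
      congr 2
      refine List.map_congr_left fun z hz => ?_
      refine subst_of_not_mem_fv (fun hx => not_mem_fvList_lam x M ?_) _
      simpa [← Finset.mem_singleton.mp ((hentry z hz).2 hx)] using hz
    · rw [subst, if_neg hxy,
        subst_substList_map hclosed (fvList_nodup _) fun z hz => (hentry z hz).2]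
      by_cases hyM : y ∈ fv M
      · exact .inr (mem_fvList.mpr (by simp [fv, hyM, Ne.symm hxy]))
      · exact .inl hyM

theorem psubstList (h : PartialInst S t) {xs : List ℕ} {us : List PTm}
    (hus : ∀ u ∈ us, IsConT u ∧ WF u) (hlen : xs.length = us.length) :
    PartialInst (S \ xs.toFinset) (psubstList t xs us) ∧
      toL (psubstList t xs us) = substList (toL t) xs (us.map toL) := by
  induction xs generalizing S t us with
  | nil => exact ⟨by simpa [PTm.psubstList] using h, rfl⟩
  | cons x xs ih =>
    obtain _ | ⟨u, us⟩ := us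
    · simp at hlen
    obtain ⟨hu, hwu⟩ := hus u (by simp)
    have := ih (h.psubst hu hwu x) (fun u' hu' => hus u' (List.mem_cons_of_mem u hu'))
      (by simpa using hlen)
    rw [psubstList_cons, List.map_cons, substList_cons, ← h.toL_psubst hu hwu]
    refine ⟨?_, this.2⟩
    convert this.1 using 1
    ext z
    simp only [Finset.mem_sdiff, Finset.mem_erase, List.toFinset_cons, Finset.mem_insert,
      List.mem_toFinset]
    tauto

end PartialInst

theorem beta_contractum {x : ℕ} {M : Tm} {ts : List PTm} {v : PTm}
    (hts : ∀ t ∈ ts, IsConT t ∧ WF t) (hlen : ts.length = (fvList (lam x M)).length)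
    (hv : IsConT v) (hwv : WF v) :
    (Canonical (psubstList (toP M) (fvList (lam x M) ++ [x]) (ts ++ [v])) ∧
      WF (psubstList (toP M) (fvList (lam x M) ++ [x]) (ts ++ [v]))) ∧
    toL (psubstList (toP M) (fvList (lam x M) ++ [x]) (ts ++ [v]))
      = subst (substList M (fvList (lam x M)) (ts.map toL)) x (toL v) := by
  have hargs : ∀ u ∈ ts ++ [v], IsConT u ∧ WF u := by
    intro u hu
    rcases List.mem_append.mp hu with hu | hu
    · exact hts u hu
    · exact List.mem_singleton.mp hu ▸ ⟨hv, hwv⟩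
  obtain ⟨hinst, htoL⟩ :=
    (partialInst_toP (subset_refl (fv M))).psubstList (xs := fvList (lam x M) ++ [x]) hargs
      (by simp [hlen])
  have hbound : fv M \ (fvList (lam x M) ++ [x]).toFinset = ∅ := by
    ext z
    by_cases hzx : z = x <;> simp [mem_fvList, fv, hzx]
  rw [hbound] at hinst
  refine ⟨⟨hinst.canonical, hinst.wf⟩, ?_⟩
  rw [htoL, toL_toP, List.map_append, substList_append (by simp [hlen])]
  rfl

theorem Canonical.isConT_of_isValue_toL {t : PTm} (h : Canonical t) (hv : IsValue (toL t)) :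
    IsConT t := by
  cases h with
  | ofCon hcon => exact hcon
  | papp => simp [IsValue] at hv

theorem cbv_toL_of_step {t t' : PTm} (ht : Canonical t ∧ WF t) (hstep : Step t t') :
    (Canonical t' ∧ WF t') ∧ Cbv (toL t) (toL t') := by
  obtain ⟨hc, hw⟩ := ht
  induction hc generalizing t' with
  | ofCon hcon => exact absurd ⟨t', hstep⟩ hcon.normalForm
  | papp hu hv ihu ihv =>
    cases hw with | papp hwu hwv =>
    cases hstep with
    | beta hts hvcon hlen =>
      cases hwu with | con _ hwts =>
      obtain ⟨hc', he⟩ := beta_contractum (fun t ht => ⟨hts t ht, hwts t ht⟩) hlen hvcon hwv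
      rw [he, toL_papp, toL_con]
      exact ⟨hc', .beta hvcon.isValue_toL⟩
    | appL h =>
      obtain ⟨⟨hc', hw'⟩, hcbv⟩ := ihu h hwu
      exact ⟨⟨.papp hc' hv, .papp hw' hwv⟩, by rw [toL_papp, toL_papp]; exact .appL hcbv⟩
    | appR h =>
      obtain ⟨⟨hc', hw'⟩, hcbv⟩ := ihv h hwv
      exact ⟨⟨.papp hu hc', .papp hwu hw'⟩, by rw [toL_papp, toL_papp]; exact .appR hcbv⟩

theorem exists_step_of_cbv_toL {t : PTm} {N : Tm} (ht : Canonical t ∧ WF t)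
    (hcbv : Cbv (toL t) N) : ∃ t', Step t t' ∧ (Canonical t' ∧ WF t') ∧ toL t' = N := by
  obtain ⟨hc, hw⟩ := ht
  induction hc generalizing N with
  | ofCon hcon =>
    cases hcon
    rw [toL_con] at hcbv
    cases hcbv
  | @papp u v hu hv ihu ihv =>
    cases hw with | papp hwu hwv =>
    rw [toL_papp] at hcbv
    generalize hA : toL u = A at hcbv
    cases hcbv with
    | beta hV =>
      have hucon := hu.isConT_of_isValue_toL (by simp [hA, IsValue])
      have hvcon := hv.isConT_of_isValue_toL hV
      cases hucon with | con hts =>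
      cases hwu with | con hlen hwts =>
      rw [toL_con, lam.injEq] at hA
      obtain ⟨rfl, rfl⟩ := hA
      exact ⟨_, .beta hts hvcon hlen,
        beta_contractum (fun t ht => ⟨hts t ht, hwts t ht⟩) hlen hvcon hwv⟩
    | appL h =>
      obtain ⟨u', hs, ⟨hc', hw'⟩, rfl⟩ := ihu (hA ▸ h) hwu
      exact ⟨papp u' v, .appL hs, ⟨.papp hc' hv, .papp hw' hwv⟩, by rw [toL_papp]⟩
    | appR h =>
      obtain ⟨v', hs, ⟨hc', hw'⟩, rfl⟩ := ihv h hwv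
      exact ⟨papp u v', .appR hs, ⟨.papp hu hc', .papp hwu hw'⟩, by rw [toL_papp, hA]⟩

end PTm

/-- Term Reducibility: for a closed λ-term `M`,
`M →v^n N` with `N` a CBV normal form iff `⌊M⌋ →^n t` in Φ with `t` a
Φ-normal form and `⌈t⌉ = N`; the number of steps is exactly preserved. -/
theorem term_reducibility (M : Tm) (hM : Tm.Closed M) (n : ℕ) (N : Tm) :
    (stepsN Tm.Cbv n M N ∧ NormalForm Tm.Cbv N) ↔
      (∃ t : PTm, stepsN PTm.Step n (PTm.toP M) t ∧
        NormalForm PTm.Step t ∧ PTm.toL t = N) := by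
  have hinst : PTm.PartialInst ∅ (PTm.toP M) := PTm.partialInst_toP hM.subset
  have hI : (PTm.toP M).Canonical ∧ (PTm.toP M).WF := ⟨hinst.canonical, hinst.wf⟩
  have hnf {t : PTm} (ht : t.Canonical ∧ t.WF) :
      NormalForm Tm.Cbv t.toL ↔ NormalForm PTm.Step t :=
    normalForm_iff_of_simulation (I := fun t => t.Canonical ∧ t.WF) PTm.cbv_toL_of_step
      PTm.exists_step_of_cbv_toL ht
  constructor
  · rintro ⟨hsteps, hN⟩
    obtain ⟨t, hst, ht, rfl⟩ :=
      stepsN_lift PTm.exists_step_of_cbv_toL hI (by rwa [PTm.toL_toP])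
    exact ⟨t, hst, (hnf ht).1 hN, rfl⟩
  · rintro ⟨t, hst, ht, rfl⟩
    obtain ⟨hI', hsteps⟩ := stepsN_map (S := PTm.Step) PTm.cbv_toL_of_step hI hst
    exact ⟨by rwa [PTm.toL_toP] at hsteps, (hnf hI').2 ht⟩
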